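/- arXiv:2006.00265 — 4 statements merged into one kernel-verified Lean document; each statement's English description precedes it below -/
import Mathlib

section
/- Let H be a real inner product space, f ∈ H, and λ ≥ 0. Then 0 minimizes the map g ↦ ‖f − g‖² + 2λ‖g‖ over H (i.e., ‖f‖² ≤ ‖f − g‖² + 2λ‖g‖ for all g ∈ H) if and only if ‖f‖ ≤ λ. -/
/-! The backward direction is Cauchy–Schwarz after expanding `‖f - g‖²`. For the forward
direction, when `λ < ‖f‖` the soft-thresholded vector `g = (1 - λ/‖f‖) • f` satisfies
`‖f - g‖ = λ` and `‖g‖ = ‖f‖ - λ`, so its objective value is `‖f‖² - (‖f‖ - λ)² < ‖f‖²`. -/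

theorem sq_norm_sub_soft_threshold_add {E : Type*} [SeminormedAddCommGroup E]
    [NormedSpace ℝ E] {f : E} {lam : ℝ} (hlam : 0 ≤ lam) (hf : lam ≤ ‖f‖) :
    ‖f - (1 - lam / ‖f‖) • f‖ ^ 2 + 2 * lam * ‖(1 - lam / ‖f‖) • f‖ =
      ‖f‖ ^ 2 - (‖f‖ - lam) ^ 2 := by
  have hcancel : lam / ‖f‖ * ‖f‖ = lam := by
    rcases eq_or_ne ‖f‖ 0 with h0 | h0
    · rw [h0] at hf ⊢
      simp [le_antisymm hf hlam]
    · exact div_mul_cancel₀ lam h0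
  have hratio : 0 ≤ lam / ‖f‖ := div_nonneg hlam (norm_nonneg f)
  have hcoef : 0 ≤ 1 - lam / ‖f‖ := by
    rw [sub_nonneg]
    exact div_le_one_of_le₀ hf (norm_nonneg f)
  have hsub : f - (1 - lam / ‖f‖) • f = (lam / ‖f‖) • f := by
    rw [sub_smul, one_smul, sub_sub_cancel]
  rw [hsub, norm_smul_of_nonneg hratio, norm_smul_of_nonneg hcoef, sub_mul, one_mul, hcancel]
  ring

theorem sq_norm_le_sq_norm_sub_add_of_norm_le {H : Type*} [NormedAddCommGroup H]
    [InnerProductSpace ℝ H] {f : H} {lam : ℝ} (hf : ‖f‖ ≤ lam) (g : H) :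
    ‖f‖ ^ 2 ≤ ‖f - g‖ ^ 2 + 2 * lam * ‖g‖ := by
  have hfg : inner ℝ f g ≤ lam * ‖g‖ :=
    (real_inner_le_norm f g).trans (mul_le_mul_of_nonneg_right hf (norm_nonneg g))
  rw [norm_sub_sq_real]
  nlinarith [sq_nonneg ‖g‖]

/-- In a real inner product space, `0` minimizes `g ↦ ‖f - g‖² + 2λ‖g‖`
if and only if `‖f‖ ≤ λ`. -/
theorem zero_minimizes_iff_norm_le {H : Type*} [NormedAddCommGroup H]
    [InnerProductSpace ℝ H] (f : H) (lam : ℝ) (hlam : 0 ≤ lam) :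
    (∀ g : H, ‖f‖ ^ 2 ≤ ‖f - g‖ ^ 2 + 2 * lam * ‖g‖) ↔ ‖f‖ ≤ lam := by
  refine ⟨fun h => ?_, sq_norm_le_sq_norm_sub_add_of_norm_le⟩
  by_contra! hlt
  have hthreshold := h ((1 - lam / ‖f‖) • f)
  rw [sq_norm_sub_soft_threshold_add hlam hlt.le] at hthreshold
  linarith [sq_pos_of_pos (sub_pos.mpr hlt)]
end

section
/- Let H be a real Hilbert space, K a closed linear subspace of H, R ∈ H, and λ ≥ 0. Let f := P_K(R) be the orthogonal projection of R onto K, and set g* := S_λ(f) = (1 − λ/‖f‖)₊ · f. Then g* ∈ K and for every g ∈ K one has ‖R − g*‖² + 2λ‖g*‖ ≤ ‖R − g‖² + 2λ‖g‖; that is, g* minimizes g ↦ ‖R − g‖² + 2λ‖g‖ over K. -/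
/-
By Pythagoras, for `g ∈ K` one has `‖R - g‖² = ‖R - f‖² + ‖f - g‖²` with `f = P_K R`, so it suffices
to show that `S_λ(f)` minimizes `g ↦ ‖f - g‖² + 2λ‖g‖` over the whole space. Since `S_λ(f)` is a
nonnegative multiple of `f`, `‖S_λ(f)‖ = (‖f‖ - λ)₊` and `‖f - S_λ(f)‖ = min ‖f‖ λ`, while the reverse
triangle inequality gives `‖f - g‖ ≥ |‖f‖ - ‖g‖|`; this reduces the claim to the scalar
inequality `min(a, λ)² + 2λ(a - λ)₊ ≤ (a - s)² + 2λs` for `s ≥ 0`.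
-/

open Submodule

/-- Soft-thresholding of `f` at level `λ` in a real normed space:
`S_λ(f) = (1 - λ/‖f‖)₊ • f` (equal to `0` whenever `‖f‖ ≤ λ`, in particular when `f = 0`). -/
noncomputable def softThreshold {H : Type*} [NormedAddCommGroup H] [Module ℝ H]
    (lam : ℝ) (f : H) : H :=
  (max (1 - lam / ‖f‖) 0) • f

theorem Submodule.norm_sub_sq_eq_norm_sub_starProjection_sq_add {𝕜 E : Type*} [RCLike 𝕜]
    [NormedAddCommGroup E] [InnerProductSpace 𝕜 E] (K : Submodule 𝕜 E) [K.HasOrthogonalProjection]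
    (v : E) {w : E} (hw : w ∈ K) :
    ‖v - w‖ ^ 2 = ‖v - K.starProjection v‖ ^ 2 + ‖K.starProjection v - w‖ ^ 2 := by
  have horth : inner 𝕜 (v - K.starProjection v) (K.starProjection v - w) = 0 :=
    K.starProjection_inner_eq_zero v _ (K.sub_mem (K.starProjection_apply_mem v) hw)
  simp only [sq, ← norm_add_sq_eq_norm_sq_add_norm_sq_of_inner_eq_zero _ _ horth,
    sub_add_sub_cancel]

theorem min_sq_add_two_mul_max_sub_le {a s lam : ℝ} (hs : 0 ≤ s) :
    min a lam ^ 2 + 2 * lam * max (a - lam) 0 ≤ (a - s) ^ 2 + 2 * lam * s := by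
  rcases le_total a lam with h | h
  · rw [min_eq_left h, max_eq_right (by linarith)]
    nlinarith
  · rw [min_eq_right h, max_eq_left (by linarith)]
    nlinarith [sq_nonneg (a - s - lam)]

theorem softThreshold_mem {H : Type*} [NormedAddCommGroup H] [Module ℝ H] {K : Submodule ℝ H}
    {f : H} (hf : f ∈ K) (lam : ℝ) : softThreshold lam f ∈ K :=
  K.smul_mem _ hf

section SoftThreshold

variable {H : Type*} [NormedAddCommGroup H] [NormedSpace ℝ H] {lam : ℝ}

theorem norm_softThreshold (hlam : 0 ≤ lam) (f : H) :
    ‖softThreshold lam f‖ = max (‖f‖ - lam) 0 := by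
  rcases eq_or_ne f 0 with rfl | hf
  · simp [softThreshold, hlam]
  have hpos : 0 < ‖f‖ := norm_pos_iff.mpr hf
  rw [softThreshold, norm_smul, Real.norm_of_nonneg (le_max_right _ _),
    max_mul_of_nonneg _ _ hpos.le, sub_mul, div_mul_cancel₀ _ hpos.ne', one_mul, zero_mul]

theorem norm_sub_softThreshold (hlam : 0 ≤ lam) (f : H) :
    ‖f - softThreshold lam f‖ = min ‖f‖ lam := by
  have ht : max (1 - lam / ‖f‖) 0 ≤ 1 :=
    max_le (by linarith [div_nonneg hlam (norm_nonneg f)]) zero_le_one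
  have hsub : f - softThreshold lam f = (1 - max (1 - lam / ‖f‖) 0) • f := by
    rw [softThreshold, sub_smul, one_smul]
  calc ‖f - softThreshold lam f‖ = ‖f‖ - ‖softThreshold lam f‖ := by
        rw [hsub, norm_smul, Real.norm_of_nonneg (sub_nonneg.mpr ht), softThreshold, norm_smul,
          Real.norm_of_nonneg (le_max_right _ _), sub_mul, one_mul]
    _ = min ‖f‖ lam := by
        rw [norm_softThreshold hlam, ← min_sub_sub_left, sub_zero, sub_sub_cancel, min_comm]

theorem norm_sub_softThreshold_sq_add_le (hlam : 0 ≤ lam) (f g : H) :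
    ‖f - softThreshold lam f‖ ^ 2 + 2 * lam * ‖softThreshold lam f‖ ≤
      ‖f - g‖ ^ 2 + 2 * lam * ‖g‖ := by
  have hdist : (‖f‖ - ‖g‖) ^ 2 ≤ ‖f - g‖ ^ 2 := by
    rw [← sq_abs]
    exact pow_le_pow_left₀ (abs_nonneg _) (abs_norm_sub_norm_le f g) 2
  rw [norm_sub_softThreshold hlam, norm_softThreshold hlam]
  linarith [min_sq_add_two_mul_max_sub_le (a := ‖f‖) (lam := lam) (norm_nonneg g)]

end SoftThreshold

/-- Let `K` be a closed subspace of a real Hilbert space `H`, `R ∈ H`, `λ ≥ 0`, and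
`f := P_K R` the orthogonal projection of `R` onto `K`. Then `g* := S_λ(f)` belongs to `K`
and minimizes `g ↦ ‖R - g‖² + 2λ‖g‖` over `K`. -/
theorem softThreshold_of_orthogonalProjection_minimizes {H : Type*} [NormedAddCommGroup H]
    [InnerProductSpace ℝ H] [CompleteSpace H] (K : Submodule ℝ H)
    (hK : IsClosed (K : Set H)) (R : H) (lam : ℝ) (hlam : 0 ≤ lam) :
    letI : CompleteSpace K := hK.completeSpace_coe
    let f : H := (orthogonalProjection K R : H)
    softThreshold lam f ∈ K ∧
      ∀ g ∈ K, ‖R - softThreshold lam f‖ ^ 2 + 2 * lam * ‖softThreshold lam f‖ ≤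
        ‖R - g‖ ^ 2 + 2 * lam * ‖g‖ := by
  have : CompleteSpace K := hK.completeSpace_coe
  simp only [coe_orthogonalProjectionOnto_apply]
  have hf : K.starProjection R ∈ K := K.starProjection_apply_mem R
  refine ⟨softThreshold_mem hf lam, fun g hg => ?_⟩
  rw [K.norm_sub_sq_eq_norm_sub_starProjection_sq_add R (softThreshold_mem hf lam),
    K.norm_sub_sq_eq_norm_sub_starProjection_sq_add R hg]
  linarith [norm_sub_softThreshold_sq_add_le hlam (K.starProjection R) g]
end

section
/- Let m₁ ≤ m₂ be sub-σ-algebras of 𝒢 and Y ∈ L²(P). Suppose E[Y | m₂] = μ + G a.e., where μ ∈ L²(P) is a.e. equal to an m₁-measurable function and G ∈ K(m₁, m₂). Then for every g ∈ K(m₁, m₂) one has ∫ (Y − g)² dP − ∫ (G − g)² dP = ∫ Y² dP − ∫ G² dP. In particular this difference does not depend on g, so g₀ ∈ K(m₁, m₂) minimizes g ↦ ∫ (Y − g)² dP over K(m₁, m₂) if and only if it minimizes g ↦ ∫ (G − g)² dP over K(m₁, m₂). -/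
open MeasureTheory

/-- `K(m₁, m₂)`: the set of `g ∈ L²(P)` that are a.e. equal to an `m₂`-measurable function
and satisfy `E[g | m₁] = 0` a.e. -/
def memK {Ω : Type*} {𝒢 : MeasurableSpace Ω} (m₁ m₂ : MeasurableSpace Ω)
    (P : Measure[𝒢] Ω) (g : Ω → ℝ) : Prop :=
  MemLp g 2 P ∧ AEStronglyMeasurable[m₂] g P ∧ P[g|m₁] =ᵐ[P] 0

/-!
For `g ∈ K(m₁, m₂)` the cross term `∫ Y g` equals `∫ G g`: conditioning on `m₂` (with respect
to which `g` is measurable) replaces `Y` by `μ + G`, and `∫ μ g = ∫ μ E[g | m₁] = 0` because `μ`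
is `m₁`-measurable. Expanding both squares, `∫ (Y - g)²` and `∫ (G - g)²` therefore differ by
the constant `∫ Y² - ∫ G²`, so they have the same minimizers.
-/

section

variable {Ω : Type*} {m mΩ : MeasurableSpace Ω} {P : Measure Ω}

lemma integral_mul_eq_integral_mul_condExp (hm : m ≤ mΩ) [SigmaFinite (P.trim hm)]
    {f g : Ω → ℝ} (hf : AEStronglyMeasurable[m] f P) (hfg : Integrable (f * g) P)
    (hg : Integrable g P) :
    ∫ ω, f ω * g ω ∂P = ∫ ω, f ω * P[g|m] ω ∂P :=
  (integral_condExp hm).symm.trans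
    (integral_congr_ae (condExp_mul_of_aestronglyMeasurable_left hf hfg hg))

lemma integral_mul_eq_zero_of_condExp_eq_zero (hm : m ≤ mΩ) [SigmaFinite (P.trim hm)]
    {f g : Ω → ℝ} (hf : AEStronglyMeasurable[m] f P) (hfg : Integrable (f * g) P)
    (hg : Integrable g P) (hg₀ : P[g|m] =ᵐ[P] 0) :
    ∫ ω, f ω * g ω ∂P = 0 := by
  rw [integral_mul_eq_integral_mul_condExp hm hf hfg hg]
  refine integral_eq_zero_of_ae ?_
  filter_upwards [hg₀] with ω hω
  simp [hω]

lemma integral_sub_sq {f g : Ω → ℝ} (hf : MemLp f 2 P) (hg : MemLp g 2 P) :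
    ∫ ω, (f ω - g ω) ^ 2 ∂P =
      ∫ ω, f ω ^ 2 ∂P - 2 * ∫ ω, f ω * g ω ∂P + ∫ ω, g ω ^ 2 ∂P := by
  have hfg : Integrable (fun ω => 2 * (f ω * g ω)) P := (hf.integrable_mul hg).const_mul 2
  calc ∫ ω, (f ω - g ω) ^ 2 ∂P = ∫ ω, f ω ^ 2 - 2 * (f ω * g ω) + g ω ^ 2 ∂P := by
        congr 1 with ω; ring
    _ = _ := by
      rw [integral_add (f := fun ω => f ω ^ 2 - 2 * (f ω * g ω)) (hf.integrable_sq.sub hfg)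
        hg.integrable_sq, integral_sub hf.integrable_sq hfg, integral_const_mul]

lemma integral_mul_eq_of_condExp_eq_add [IsFiniteMeasure P] {m₁ m₂ : MeasurableSpace Ω}
    (h12 : m₁ ≤ m₂) (h2 : m₂ ≤ mΩ) {Y μ G g : Ω → ℝ} (hY : MemLp Y 2 P) (hμ : MemLp μ 2 P)
    (hμm : AEStronglyMeasurable[m₁] μ P) (hG : MemLp G 2 P)
    (hYcond : P[Y|m₂] =ᵐ[P] fun ω => μ ω + G ω) (hg : memK m₁ m₂ P g) :
    ∫ ω, Y ω * g ω ∂P = ∫ ω, G ω * g ω ∂P := by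
  obtain ⟨hg2, hgm, hg₀⟩ := hg
  have hμg : ∫ ω, μ ω * g ω ∂P = 0 :=
    integral_mul_eq_zero_of_condExp_eq_zero (h12.trans h2) hμm (hμ.integrable_mul hg2)
      (hg2.integrable one_le_two) hg₀
  calc ∫ ω, Y ω * g ω ∂P = ∫ ω, g ω * Y ω ∂P := by simp only [mul_comm]
    _ = ∫ ω, g ω * (μ ω + G ω) ∂P := by
      rw [integral_mul_eq_integral_mul_condExp h2 hgm (hg2.integrable_mul hY)
        (hY.integrable one_le_two)]
      refine integral_congr_ae ?_
      filter_upwards [hYcond] with ω hω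
      rw [hω]
    _ = ∫ ω, μ ω * g ω + G ω * g ω ∂P := by congr 1 with ω; ring
    _ = ∫ ω, μ ω * g ω ∂P + ∫ ω, G ω * g ω ∂P :=
      integral_add (hμ.integrable_mul hg2) (hG.integrable_mul hg2)
    _ = ∫ ω, G ω * g ω ∂P := by rw [hμg, zero_add]

end

lemma isMinOn_iff_of_sub_eq_const {α β : Type*} [AddCommGroup β] [PartialOrder β]
    [IsOrderedAddMonoid β] {s : Set α} {F H : α → β} {c : β} (h : ∀ x ∈ s, F x - H x = c)
    {a : α} (ha : a ∈ s) : IsMinOn F s a ↔ IsMinOn H s a := by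
  have hH : ∀ x ∈ s, H x = F x - c := fun x hx => by rw [← h x hx, sub_sub_cancel]
  simp only [isMinOn_iff]
  exact forall₂_congr fun x hx => by rw [hH a ha, hH x hx, sub_le_sub_iff_right]

/-- If `E[Y|m₂] = μ + G` a.e. with `μ` a.e. `m₁`-measurable and `G ∈ K(m₁, m₂)`, then for every
`g ∈ K(m₁, m₂)`, `∫ (Y - g)² dP - ∫ (G - g)² dP = ∫ Y² dP - ∫ G² dP`; in particular this
difference does not depend on `g`, so `g₀ ∈ K(m₁, m₂)` minimizes `g ↦ ∫ (Y - g)² dP` over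
`K(m₁, m₂)` iff it minimizes `g ↦ ∫ (G - g)² dP` over `K(m₁, m₂)`. -/
theorem squared_error_shift_invariance {Ω : Type*} {𝒢 : MeasurableSpace Ω}
    (P : Measure Ω) [IsProbabilityMeasure P] (m₁ m₂ : MeasurableSpace Ω)
    (h12 : m₁ ≤ m₂) (h2 : m₂ ≤ 𝒢)
    (Y μ G : Ω → ℝ) (hY : MemLp Y 2 P) (hμ : MemLp μ 2 P)
    (hμm : AEStronglyMeasurable[m₁] μ P) (hG : memK m₁ m₂ P G)
    (hYcond : P[Y|m₂] =ᵐ[P] fun ω => μ ω + G ω) :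
    (∀ g : Ω → ℝ, memK m₁ m₂ P g →
      (∫ ω, (Y ω - g ω) ^ 2 ∂P) - ∫ ω, (G ω - g ω) ^ 2 ∂P =
        (∫ ω, Y ω ^ 2 ∂P) - ∫ ω, G ω ^ 2 ∂P) ∧
    (∀ g₀ : Ω → ℝ, memK m₁ m₂ P g₀ →
      ((∀ g : Ω → ℝ, memK m₁ m₂ P g →
          ∫ ω, (Y ω - g₀ ω) ^ 2 ∂P ≤ ∫ ω, (Y ω - g ω) ^ 2 ∂P) ↔
        (∀ g : Ω → ℝ, memK m₁ m₂ P g →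
          ∫ ω, (G ω - g₀ ω) ^ 2 ∂P ≤ ∫ ω, (G ω - g ω) ^ 2 ∂P))) := by
  have hdiff : ∀ g : Ω → ℝ, memK m₁ m₂ P g →
      (∫ ω, (Y ω - g ω) ^ 2 ∂P) - ∫ ω, (G ω - g ω) ^ 2 ∂P =
        (∫ ω, Y ω ^ 2 ∂P) - ∫ ω, G ω ^ 2 ∂P := fun g hg => by
    rw [integral_sub_sq hY hg.1, integral_sub_sq hG.1 hg.1,
      integral_mul_eq_of_condExp_eq_add h12 h2 hY hμ hμm hG.1 hYcond hg]
    ring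
  exact ⟨hdiff, fun g₀ hg₀ => isMinOn_iff_of_sub_eq_const (s := {g | memK m₁ m₂ P g}) hdiff hg₀⟩
end

section
/- Let m₁ ≤ m₂ be sub-σ-algebras of 𝒢, R ∈ L²(P), and f := E[R | m₂] − E[R | m₁]. Then for every g ∈ K(m₁, m₂) one has the Pythagorean identity ∫ (R − g)² dP = ∫ (R − f)² dP + ∫ (f − g)² dP. -/
open MeasureTheory

/-! `f = E[R|m₂] - E[R|m₁]` lies in `K(m₁, m₂)` and `R - f = (R - E[R|m₂]) + E[R|m₁]` is
orthogonal to `K(m₁, m₂)`: the first summand to everything `m₂`-measurable, the second to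
everything with vanishing `m₁`-conditional expectation. So `f` is the orthogonal projection of `R`
onto `K(m₁, m₂)`, and the identity is Pythagoras for `R - g = (R - f) + (f - g)`. -/

section

variable {Ω : Type*} {m m₁ m₂ m₀ : MeasurableSpace Ω} {μ : Measure[m₀] Ω}

theorem integral_sub_sq_eq_add_of_integral_mul_eq_zero {u v w : Ω → ℝ} (hu : MemLp u 2 μ)
    (hv : MemLp v 2 μ) (hw : MemLp w 2 μ) (h : ∫ ω, (u ω - v ω) * (v ω - w ω) ∂μ = 0) :
    ∫ ω, (u ω - w ω) ^ 2 ∂μ = ∫ ω, (u ω - v ω) ^ 2 ∂μ + ∫ ω, (v ω - w ω) ^ 2 ∂μ := by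
  have huv : MemLp (u - v) 2 μ := hu.sub hv
  have hvw : MemLp (v - w) 2 μ := hv.sub hw
  have huv_sq : Integrable (fun ω => (u ω - v ω) ^ 2) μ := huv.integrable_sq
  have hvw_sq : Integrable (fun ω => (v ω - w ω) ^ 2) μ := hvw.integrable_sq
  have hcross : Integrable (fun ω => (u ω - v ω) * (v ω - w ω)) μ := huv.integrable_mul hvw
  calc ∫ ω, (u ω - w ω) ^ 2 ∂μ
      = ∫ ω, ((u ω - v ω) ^ 2 + (v ω - w ω) ^ 2) + 2 * ((u ω - v ω) * (v ω - w ω)) ∂μ := by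
        congr 1; ext ω; ring
    _ = ∫ ω, (u ω - v ω) ^ 2 + (v ω - w ω) ^ 2 ∂μ
          + ∫ ω, 2 * ((u ω - v ω) * (v ω - w ω)) ∂μ :=
        integral_add (huv_sq.add hvw_sq) (hcross.const_mul 2)
    _ = ∫ ω, (u ω - v ω) ^ 2 ∂μ + ∫ ω, (v ω - w ω) ^ 2 ∂μ := by
        rw [integral_add huv_sq hvw_sq, integral_const_mul, h, mul_zero, add_zero]

theorem integral_mul_eq_zero_of_condExp_ae_eq_zero [IsFiniteMeasure μ] (hm : m ≤ m₀)
    {ψ x : Ω → ℝ} (hψm : AEStronglyMeasurable[m] ψ μ) (hψ : MemLp ψ 2 μ) (hx : MemLp x 2 μ)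
    (hx0 : μ[x|m] =ᵐ[μ] 0) : ∫ ω, ψ ω * x ω ∂μ = 0 := by
  have hpull : μ[ψ * x|m] =ᵐ[μ] ψ * μ[x|m] :=
    condExp_mul_of_aestronglyMeasurable_left hψm (hψ.integrable_mul hx) (hx.integrable one_le_two)
  calc ∫ ω, ψ ω * x ω ∂μ = ∫ ω, (μ[ψ * x|m]) ω ∂μ := (integral_condExp hm).symm
    _ = ∫ ω, (ψ * μ[x|m]) ω ∂μ := integral_congr_ae hpull
    _ = ∫ ω, (0 : Ω → ℝ) ω ∂μ := integral_congr_ae (hx0.mono fun ω hω => by simp [hω])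
    _ = 0 := by simp

theorem condExp_sub_condExp_ae_eq_zero (hm : m ≤ m₀) [SigmaFinite (μ.trim hm)] {f : Ω → ℝ}
    (hf : Integrable f μ) : μ[f - μ[f|m]|m] =ᵐ[μ] 0 := by
  have hself : μ[μ[f|m]|m] = μ[f|m] :=
    condExp_of_stronglyMeasurable hm stronglyMeasurable_condExp integrable_condExp
  filter_upwards [condExp_sub hf (integrable_condExp (m := m) (f := f)) m] with ω hω
  simp [hω, hself]

theorem memK.sub [IsFiniteMeasure μ] {f g : Ω → ℝ} (hf : memK m₁ m₂ μ f) (hg : memK m₁ m₂ μ g) :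
    memK m₁ m₂ μ (f - g) := by
  obtain ⟨hf2, hfm, hf0⟩ := hf
  obtain ⟨hg2, hgm, hg0⟩ := hg
  refine ⟨hf2.sub hg2, hfm.sub hgm, ?_⟩
  filter_upwards [condExp_sub (hf2.integrable one_le_two) (hg2.integrable one_le_two) m₁, hf0,
    hg0] with ω h h₁ h₂
  simp [h, h₁, h₂]

theorem memK_condExp_sub_condExp [IsFiniteMeasure μ] (h12 : m₁ ≤ m₂) (h2 : m₂ ≤ m₀)
    {R : Ω → ℝ} (hR : MemLp R 2 μ) : memK m₁ m₂ μ (μ[R|m₂] - μ[R|m₁]) := by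
  refine ⟨(hR.condExp one_le_two).sub (hR.condExp one_le_two),
    (stronglyMeasurable_condExp.sub (stronglyMeasurable_condExp.mono h12)).aestronglyMeasurable,
    ?_⟩
  have hself : μ[μ[R|m₁]|m₁] = μ[R|m₁] :=
    condExp_of_stronglyMeasurable (h12.trans h2) stronglyMeasurable_condExp integrable_condExp
  filter_upwards [condExp_sub (integrable_condExp (m := m₂) (f := R))
    (integrable_condExp (m := m₁) (f := R)) m₁, condExp_condExp_of_le (f := R) h12 h2]
    with ω hsub htower
  simp [hsub, htower, hself]

theorem integral_sub_condExp_sub_condExp_mul_eq_zero [IsFiniteMeasure μ] (h12 : m₁ ≤ m₂)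
    (h2 : m₂ ≤ m₀) {R k : Ω → ℝ} (hR : MemLp R 2 μ) (hk : memK m₁ m₂ μ k) :
    ∫ ω, (R ω - ((μ[R|m₂]) ω - (μ[R|m₁]) ω)) * k ω ∂μ = 0 := by
  obtain ⟨hk2, hkm, hk0⟩ := hk
  have hE₁ : MemLp (μ[R|m₁]) 2 μ := hR.condExp one_le_two
  have hE₂ : MemLp (μ[R|m₂]) 2 μ := hR.condExp one_le_two
  have hfine : ∫ ω, k ω * (R ω - (μ[R|m₂]) ω) ∂μ = 0 :=
    integral_mul_eq_zero_of_condExp_ae_eq_zero h2 hkm hk2 (hR.sub hE₂)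
      (condExp_sub_condExp_ae_eq_zero h2 (hR.integrable one_le_two))
  have hcoarse : ∫ ω, (μ[R|m₁]) ω * k ω ∂μ = 0 :=
    integral_mul_eq_zero_of_condExp_ae_eq_zero (h12.trans h2)
      stronglyMeasurable_condExp.aestronglyMeasurable hE₁ hk2 hk0
  calc ∫ ω, (R ω - ((μ[R|m₂]) ω - (μ[R|m₁]) ω)) * k ω ∂μ
      = ∫ ω, k ω * (R ω - (μ[R|m₂]) ω) + (μ[R|m₁]) ω * k ω ∂μ := by
        congr 1; ext ω; ring
    _ = ∫ ω, k ω * (R ω - (μ[R|m₂]) ω) ∂μ + ∫ ω, (μ[R|m₁]) ω * k ω ∂μ :=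
        integral_add (hk2.integrable_mul (hR.sub hE₂)) (hE₁.integrable_mul hk2)
    _ = 0 := by rw [hfine, hcoarse, add_zero]

end

/-- Pythagorean identity: for `R ∈ L²(P)`, `f := E[R|m₂] - E[R|m₁]` and every
`g ∈ K(m₁, m₂)`, `∫ (R - g)² dP = ∫ (R - f)² dP + ∫ (f - g)² dP`. -/
theorem pythagorean_identity_condexp_projection {Ω : Type*} {𝒢 : MeasurableSpace Ω}
    (P : Measure Ω) [IsProbabilityMeasure P] (m₁ m₂ : MeasurableSpace Ω)
    (h12 : m₁ ≤ m₂) (h2 : m₂ ≤ 𝒢) (R : Ω → ℝ) (hR : MemLp R 2 P) :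
    ∀ g : Ω → ℝ, memK m₁ m₂ P g →
      ∫ ω, (R ω - g ω) ^ 2 ∂P =
        (∫ ω, (R ω - ((P[R|m₂]) ω - (P[R|m₁]) ω)) ^ 2 ∂P) +
          ∫ ω, (((P[R|m₂]) ω - (P[R|m₁]) ω) - g ω) ^ 2 ∂P := by
  intro g hg
  have hf : memK m₁ m₂ P (P[R|m₂] - P[R|m₁]) := memK_condExp_sub_condExp h12 h2 hR
  exact integral_sub_sq_eq_add_of_integral_mul_eq_zero hR hf.1 hg.1
    (integral_sub_condExp_sub_condExp_mul_eq_zero h12 h2 hR (hf.sub hg))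
end
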